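/- Let A = ℤ[t₁,t₂,t₃,t₄,t,γ₃,γ₄]/(ρ₁,ρ₂,ρ₃,ρ₄,ρ₆,ρ₈,ρ₁₂) where ρ₁ = c₁ − 2t, ρ₂ = c₂ − 2t², ρ₃ = c₃ − 2γ₃, ρ₄ = c₄ − 4tγ₃ + 8t⁴ − 3γ₄, ρ₆ = γ₃² − 3t²γ₄ − 4t³γ₃ + 8t⁶, ρ₈ = 3γ₄² + 6tγ₃γ₄ − 3t⁴γ₄ − 13t⁸, ρ₁₂ = γ₄³ − 6t⁴γ₄² + 12t⁸γ₄ − 8t¹², and cᵢ = eᵢ(t₁,t₂,t₃,t₄). Then the quotient of A by the ideal generated by t₁, t₂, t₃, t₄, t is isomorphic as a ring to ℤ[X₃, X₄]/(2X₃, 3X₄, X₃², X₄³). -/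

import Mathlib

open MvPolynomial

/-!
Modulo `t₁, …, t₄, t` every `cₖ` with `k ≥ 1` vanishes, so the relations `ρ` reduce to
`2γ₃, 3γ₄, γ₃², 3γ₄², γ₄³`, and `3γ₄²` is a multiple of `3γ₄`. By the third isomorphism
theorem the double quotient is `ℤ[t₁,…,t₄,t,γ₃,γ₄] ⧸ (I13 + (t₁,…,t₄,t))`, and the
substitution `tᵢ, t ↦ 0, γ₃ ↦ X₃, γ₄ ↦ X₄` is a surjection onto `ℤ[X₃,X₄]` under which
`(2X₃, 3X₄, X₃², X₄³)` pulls back to exactly `I13 + (t₁,…,t₄,t)`.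
-/

/-- `cᵢ = eᵢ(t₁,t₂,t₃,t₄)` in `ℤ[t₁,t₂,t₃,t₄,t,γ₃,γ₄]`, where
`t₁,…,t₄ = X 0,…,X 3`, `t = X 4`, `γ₃ = X 5`, `γ₄ = X 6`. -/
noncomputable def c13 (k : ℕ) : MvPolynomial (Fin 7) ℤ :=
  ∑ A ∈ ({0, 1, 2, 3} : Finset (Fin 7)).powersetCard k, ∏ i ∈ A, X i

/-- The ideal `(ρ₁, ρ₂, ρ₃, ρ₄, ρ₆, ρ₈, ρ₁₂)` of the Toda–Watanabe
presentation of `H*(F₄/T;ℤ)`. -/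
noncomputable def I13 : Ideal (MvPolynomial (Fin 7) ℤ) :=
  Ideal.span
    { c13 1 - 2 * X 4,
      c13 2 - 2 * (X 4) ^ 2,
      c13 3 - 2 * X 5,
      c13 4 - 4 * X 4 * X 5 + 8 * (X 4) ^ 4 - 3 * X 6,
      (X 5) ^ 2 - 3 * (X 4) ^ 2 * X 6 - 4 * (X 4) ^ 3 * X 5 + 8 * (X 4) ^ 6,
      3 * (X 6) ^ 2 + 6 * X 4 * X 5 * X 6 - 3 * (X 4) ^ 4 * X 6 - 13 * (X 4) ^ 8,
      (X 6) ^ 3 - 6 * (X 4) ^ 4 * (X 6) ^ 2 + 12 * (X 4) ^ 8 * X 6 - 8 * (X 4) ^ 12 }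

noncomputable def Ideal.quotientComapEquivOfSurjective {R S : Type*} [CommRing R] [CommRing S]
    {f : R →+* S} (hf : Function.Surjective f) (J : Ideal S) : R ⧸ J.comap f ≃+* S ⧸ J :=
  (Ideal.quotEquivOfEq (by rw [← RingHom.comap_ker, Ideal.mk_ker])).trans
    (RingHom.quotientKerEquivOfSurjective (f := (Ideal.Quotient.mk J).comp f)
      (Ideal.Quotient.mk_surjective.comp hf))

noncomputable def degreeTwoIdeal : Ideal (MvPolynomial (Fin 7) ℤ) :=
  Ideal.span {X 0, X 1, X 2, X 3, X 4}

noncomputable def chowIdealF4 : Ideal (MvPolynomial (Fin 2) ℤ) :=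
  Ideal.span {2 * X 0, 3 * X 1, X 0 ^ 2, X 1 ^ 3}

noncomputable def killDegreeTwo : MvPolynomial (Fin 7) ℤ →ₐ[ℤ] MvPolynomial (Fin 2) ℤ :=
  aeval ![0, 0, 0, 0, 0, X 0, X 1]

noncomputable def includeGammas : MvPolynomial (Fin 2) ℤ →ₐ[ℤ] MvPolynomial (Fin 7) ℤ :=
  rename ![5, 6]

lemma X_mem_degreeTwoIdeal {i : Fin 7} (hi : i.val < 5) : X i ∈ degreeTwoIdeal :=
  Ideal.subset_span <| by fin_cases i <;> simp_all

lemma c13_mem_degreeTwoIdeal {k : ℕ} (hk : k ≠ 0) : c13 k ∈ degreeTwoIdeal := by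
  refine Ideal.sum_mem _ fun A hA => ?_
  rw [Finset.mem_powersetCard] at hA
  obtain ⟨i, hi⟩ := Finset.card_pos.mp (show 0 < A.card by omega)
  refine Ideal.prod_mem _ hi (X_mem_degreeTwoIdeal ?_)
  have := hA.1 hi
  simp only [Finset.mem_insert, Finset.mem_singleton] at this
  rcases this with rfl | rfl | rfl | rfl <;> decide

lemma killDegreeTwo_X (i : Fin 7) : killDegreeTwo (X i) = ![0, 0, 0, 0, 0, X 0, X 1] i :=
  aeval_X _ _

lemma degreeTwoIdeal_le_ker : degreeTwoIdeal ≤ RingHom.ker killDegreeTwo := by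
  rw [degreeTwoIdeal, Ideal.span_le]
  intro p hp
  simp only [Set.mem_insert_iff, Set.mem_singleton_iff] at hp
  rcases hp with rfl | rfl | rfl | rfl | rfl <;> simp [killDegreeTwo_X]

lemma killDegreeTwo_comp_includeGammas :
    killDegreeTwo.comp includeGammas = AlgHom.id ℤ (MvPolynomial (Fin 2) ℤ) := by
  ext i
  fin_cases i <;> simp [killDegreeTwo_X, includeGammas]

lemma killDegreeTwo_surjective : Function.Surjective killDegreeTwo :=
  fun q => ⟨includeGammas q, AlgHom.congr_fun killDegreeTwo_comp_includeGammas q⟩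

lemma includeGammas_killDegreeTwo_sub_mem (p : MvPolynomial (Fin 7) ℤ) :
    includeGammas (killDegreeTwo p) - p ∈ degreeTwoIdeal := by
  rw [← Ideal.Quotient.eq]
  suffices h : (Ideal.Quotient.mkₐ ℤ degreeTwoIdeal).comp (includeGammas.comp killDegreeTwo) =
      Ideal.Quotient.mkₐ ℤ degreeTwoIdeal from congrArg (· p) h
  ext i
  fin_cases i <;> simp [killDegreeTwo_X, includeGammas] <;>
    exact (Ideal.Quotient.eq_zero_iff_mem.2 (X_mem_degreeTwoIdeal (by decide))).symm

lemma gamma_relations_mem_sup :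
    2 * X 5 ∈ I13 ⊔ degreeTwoIdeal ∧ 3 * X 6 ∈ I13 ⊔ degreeTwoIdeal ∧
      X 5 ^ 2 ∈ I13 ⊔ degreeTwoIdeal ∧ X 6 ^ 3 ∈ I13 ⊔ degreeTwoIdeal := by
  simp only [← Ideal.Quotient.eq_zero_iff_mem, map_mul, map_pow, map_ofNat]
  set q := Ideal.Quotient.mk (I13 ⊔ degreeTwoIdeal)
  have rel : ∀ r ∈ I13, q r = 0 := fun r hr =>
    Ideal.Quotient.eq_zero_iff_mem.2 (Ideal.mem_sup_left hr)
  have kill : ∀ r ∈ degreeTwoIdeal, q r = 0 := fun r hr =>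
    Ideal.Quotient.eq_zero_iff_mem.2 (Ideal.mem_sup_right hr)
  have ρ₃ := rel _ (Ideal.subset_span (by simp) : c13 3 - 2 * X 5 ∈ I13)
  have ρ₄ := rel _ (Ideal.subset_span (by simp) :
    c13 4 - 4 * X 4 * X 5 + 8 * (X 4) ^ 4 - 3 * X 6 ∈ I13)
  have ρ₆ := rel _ (Ideal.subset_span (by simp) :
    (X 5) ^ 2 - 3 * (X 4) ^ 2 * X 6 - 4 * (X 4) ^ 3 * X 5 + 8 * (X 4) ^ 6 ∈ I13)
  have ρ₁₂ := rel _ (Ideal.subset_span (by simp) :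
    (X 6) ^ 3 - 6 * (X 4) ^ 4 * (X 6) ^ 2 + 12 * (X 4) ^ 8 * X 6 - 8 * (X 4) ^ 12 ∈ I13)
  have c₃ := kill _ (c13_mem_degreeTwoIdeal (k := 3) (by norm_num))
  have c₄ := kill _ (c13_mem_degreeTwoIdeal (k := 4) (by norm_num))
  have t := kill _ (X_mem_degreeTwoIdeal (i := 4) (by decide))
  simp only [map_sub, map_add, map_mul, map_pow, map_ofNat] at ρ₃ ρ₄ ρ₆ ρ₁₂
  refine ⟨?_, ?_, ?_, ?_⟩
  · linear_combination c₃ - ρ₃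
  · linear_combination c₄ + (8 * q (X 4) ^ 3 - 4 * q (X 5)) * t - ρ₄
  · linear_combination ρ₆ +
      (3 * q (X 4) * q (X 6) + 4 * q (X 4) ^ 2 * q (X 5) - 8 * q (X 4) ^ 5) * t
  · linear_combination ρ₁₂ +
      (6 * q (X 4) ^ 3 * q (X 6) ^ 2 - 12 * q (X 4) ^ 7 * q (X 6) + 8 * q (X 4) ^ 11) * t

lemma chowIdealF4_map_includeGammas_le :
    chowIdealF4.map includeGammas ≤ I13 ⊔ degreeTwoIdeal := by
  obtain ⟨h₃, h₄, h₆, h₁₂⟩ := gamma_relations_mem_sup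
  rw [chowIdealF4, Ideal.map_span, Ideal.span_le]
  rintro _ ⟨p, hp, rfl⟩
  simp only [Set.mem_insert_iff, Set.mem_singleton_iff] at hp
  rcases hp with rfl | rfl | rfl | rfl <;> simpa [includeGammas, map_ofNat]

lemma I13_le_comap_killDegreeTwo : I13 ≤ chowIdealF4.comap killDegreeTwo := by
  have hc : ∀ {k : ℕ}, k ≠ 0 → killDegreeTwo (c13 k) = 0 := fun hk =>
    degreeTwoIdeal_le_ker (c13_mem_degreeTwoIdeal hk)
  have gen : ∀ p ∈ ({2 * X 0, 3 * X 1, X 0 ^ 2, X 1 ^ 3} : Set (MvPolynomial (Fin 2) ℤ)),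
      p ∈ chowIdealF4 := fun _ hp => Ideal.subset_span hp
  rw [I13, Ideal.span_le]
  intro r hr
  simp only [Set.mem_insert_iff, Set.mem_singleton_iff] at hr
  rcases hr with rfl | rfl | rfl | rfl | rfl | rfl | rfl <;>
    simp [killDegreeTwo_X, hc, map_ofNat]
  · exact gen _ (by simp)
  · exact gen _ (by simp)
  · exact gen _ (by simp)
  · rw [pow_two, mul_left_comm]
    exact chowIdealF4.mul_mem_left (X 1) (gen _ (by simp))
  · exact gen _ (by simp)

lemma comap_killDegreeTwo_chowIdealF4 :
    chowIdealF4.comap killDegreeTwo = I13 ⊔ degreeTwoIdeal := by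
  refine le_antisymm (fun p hp => ?_) (sup_le I13_le_comap_killDegreeTwo ?_)
  · have hlift : includeGammas (killDegreeTwo p) ∈ I13 ⊔ degreeTwoIdeal :=
      chowIdealF4_map_includeGammas_le (Ideal.mem_map_of_mem _ hp)
    simpa using sub_mem hlift (Ideal.mem_sup_right (includeGammas_killDegreeTwo_sub_mem p))
  · exact degreeTwoIdeal_le_ker.trans (Ideal.comap_mono bot_le)

/-- The quotient of `A = ℤ[t₁,t₂,t₃,t₄,t,γ₃,γ₄]/(ρ's)` by the
ideal generated by the classes of `t₁, t₂, t₃, t₄, t` is isomorphic as a ring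
to `ℤ[X₃,X₄]/(2X₃, 3X₄, X₃², X₄³)` (the Chow ring of `F₄`). -/
theorem stmt13 :
    Nonempty
      (((MvPolynomial (Fin 7) ℤ ⧸ I13) ⧸
          Ideal.span {Ideal.Quotient.mk I13 (X 0), Ideal.Quotient.mk I13 (X 1),
            Ideal.Quotient.mk I13 (X 2), Ideal.Quotient.mk I13 (X 3),
            Ideal.Quotient.mk I13 (X 4)}) ≃+*
        (MvPolynomial (Fin 2) ℤ ⧸
          Ideal.span ({2 * X 0, 3 * X 1, (X 0) ^ 2, (X 1) ^ 3} :
            Set (MvPolynomial (Fin 2) ℤ)))) := by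
  have hK : Ideal.span {Ideal.Quotient.mk I13 (X 0), Ideal.Quotient.mk I13 (X 1),
      Ideal.Quotient.mk I13 (X 2), Ideal.Quotient.mk I13 (X 3), Ideal.Quotient.mk I13 (X 4)} =
      degreeTwoIdeal.map (Ideal.Quotient.mk I13) := by
    simp [degreeTwoIdeal, Ideal.map_span, Set.image_insert_eq]
  exact ⟨(Ideal.quotEquivOfEq hK).trans <|
    (DoubleQuot.quotQuotEquivQuotSup I13 degreeTwoIdeal).trans <|
    (Ideal.quotEquivOfEq comap_killDegreeTwo_chowIdealF4.symm).trans <|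
    Ideal.quotientComapEquivOfSurjective (f := killDegreeTwo.toRingHom)
      killDegreeTwo_surjective chowIdealF4⟩
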